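/- arXiv:0707.2350 — 2 statements merged into one kernel-verified Lean document; each statement's English description precedes it below -/
import Mathlib

section
/- Let E be a finite linearly ordered set, let g : E → E be a bijection, let γ be a subset of E and let e ∈ γ. Then sgn(g:γ) · sgn(g:γ∖{e}) = (−1)^{pos(e:γ)} · (−1)^{pos(g(e):g(γ))}. -/
/-- `pos(e:γ)`: the number of elements `j ∈ γ` with `j ≤ e`. -/
def finsetPos {E : Type*} [LinearOrder E] (γ : Finset E) (e : E) : ℕ :=
  (γ.filter (fun j => j ≤ e)).card

/-- `sgn(g:γ)`: the signature of the bijection `γ → g(γ), e ↦ g e`, where both sides are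
identified with `Fin γ.card` via the unique order-preserving bijections. -/
noncomputable def finsetSign {E : Type*} [LinearOrder E] (g : E ≃ E) (γ : Finset E) : ℤ :=
  (Equiv.Perm.sign
    (((γ.orderIsoOfFin rfl).toEquiv.trans
      (g.subtypeEquiv (fun a =>
        ⟨fun ha => Finset.mem_image_of_mem g ha,
         fun hb => by
          obtain ⟨c, hc, hce⟩ := Finset.mem_image.mp hb
          rw [← g.injective hce]; exact hc⟩))).trans
      ((γ.image g).orderIsoOfFin
        (Finset.card_image_of_injective γ g.injective)).toEquiv.symm) : ℤ)

/-!
Identify `γ` and `g(γ)` with `Fin (n + 1)` and `γ ∖ {e}`, `g(γ) ∖ {g e}` with `Fin n`, so that the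
two bijections become permutations `σ` and `σ'` with `σ i = j` and `σ ∘ i.succAbove = j.succAbove ∘ σ'`,
where `i + 1 = pos(e:γ)` and `j + 1 = pos(g e : g(γ))`. Conjugating `σ` by the cycles
`(0 1 … i)` and `(0 1 … j)` gives a permutation fixing `0` that acts as `σ'` on the rest, so
`sgn σ = (-1)^i · sgn σ' · (-1)^j`.
-/

open Equiv Finset

theorem Equiv.Perm.sign_mul_sign_eq_neg_one_pow_of_succAbove {n : ℕ} {σ : Perm (Fin (n + 1))}
    {σ' : Perm (Fin n)} {i j : Fin (n + 1)} (hi : σ i = j)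
    (hsucc : ∀ k, σ (i.succAbove k) = j.succAbove (σ' k)) :
    Perm.sign σ * Perm.sign σ' = (-1) ^ ((i : ℕ) + (j : ℕ)) := by
  have hconj : j.cycleRange * σ * i.cycleRange⁻¹ = Perm.decomposeFin.symm (0, σ') := by
    ext k
    induction k using Fin.cases with
    | zero => simp [Perm.mul_apply, hi]
    | succ k =>
      have : i.cycleRange⁻¹ k.succ = i.succAbove k := by
        rw [Perm.inv_eq_iff_eq, Fin.cycleRange_succAbove]
      simp [Perm.mul_apply, this, hsucc]
  have hsign := congrArg Perm.sign hconj
  simp only [Perm.sign_mul, Perm.sign_inv, Fin.sign_cycleRange, Perm.decomposeFin.symm_sign,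
    ↓reduceIte, one_mul] at hsign
  rw [← hsign, pow_add]
  calc Perm.sign σ * ((-1) ^ (j : ℕ) * Perm.sign σ * (-1) ^ (i : ℕ))
      = (Perm.sign σ * Perm.sign σ) * ((-1) ^ (i : ℕ) * (-1) ^ (j : ℕ)) := by ac_rfl
    _ = (-1) ^ (i : ℕ) * (-1) ^ (j : ℕ) := by rw [Int.units_mul_self, one_mul]

namespace Finset

variable {α : Type*} [LinearOrder α]

theorem card_filter_le_eq_orderIsoOfFin_symm_add_one (s : Finset α) {m : ℕ} (h : s.card = m)
    {x : α} (hx : x ∈ s) :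
    (s.filter (· ≤ x)).card = ((s.orderIsoOfFin h).symm ⟨x, hx⟩ : ℕ) + 1 := by
  set i := (s.orderIsoOfFin h).symm ⟨x, hx⟩
  have himage : s.filter (· ≤ x) = (Iic i).image (s.orderEmbOfFin h) := by
    ext y
    simp only [mem_filter, mem_image, mem_Iic]
    constructor
    · rintro ⟨hy, hyx⟩
      refine ⟨(s.orderIsoOfFin h).symm ⟨y, hy⟩, ?_, by
        rw [← coe_orderIsoOfFin_apply, OrderIso.apply_symm_apply]⟩
      exact (s.orderIsoOfFin h).symm.monotone (Subtype.mk_le_mk.2 hyx)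
    · rintro ⟨k, hk, rfl⟩
      refine ⟨orderEmbOfFin_mem s h k, ?_⟩
      simpa [i] using Subtype.coe_le_coe.2 ((s.orderIsoOfFin h).monotone hk)
  rw [himage, card_image_of_injective _ (s.orderEmbOfFin h).injective, Fin.card_Iic]

theorem orderIsoOfFin_succAbove_orderIsoOfFin_symm {s t : Finset α} {n : ℕ} (h : s.card = n + 1)
    {x : α} (hx : x ∈ s) (ht : s.erase x = t) (h' : t.card = n) (k : Fin n) :
    (s.orderIsoOfFin h (((s.orderIsoOfFin h).symm ⟨x, hx⟩).succAbove k) : α) =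
      t.orderEmbOfFin h' k := by
  subst ht
  set i := (s.orderIsoOfFin h).symm ⟨x, hx⟩
  refine congrFun (orderEmbOfFin_unique h' (fun k => mem_erase.2 ⟨?_, orderEmbOfFin_mem s h _⟩)
    ((s.orderEmbOfFin h).strictMono.comp (Fin.strictMono_succAbove i))) k
  intro hxk
  refine Fin.succAbove_ne i k ((s.orderIsoOfFin h).injective (Subtype.ext ?_))
  simpa [i] using hxk

end Finset

section finsetSign

variable {E : Type*} [LinearOrder E]

def finsetPerm (g : E ≃ E) (γ : Finset E) {k : ℕ} (h : γ.card = k) : Perm (Fin k) :=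
  ((γ.orderIsoOfFin h).toEquiv.trans
      (g.subtypeEquiv fun _ => g.injective.mem_finset_image.symm)).trans
    ((γ.image g).orderIsoOfFin (by rw [card_image_of_injective γ g.injective, h])).toEquiv.symm

theorem finsetSign_eq_sign_finsetPerm (g : E ≃ E) (γ : Finset E) {k : ℕ} (h : γ.card = k) :
    finsetSign g γ = Perm.sign (finsetPerm g γ h) := by
  subst h; rfl

theorem coe_orderIsoOfFin_finsetPerm (g : E ≃ E) (γ : Finset E) {k : ℕ} (h : γ.card = k)
    (hi : (γ.image g).card = k) (a : Fin k) :
    ((γ.image g).orderIsoOfFin hi (finsetPerm g γ h a) : E) = g (γ.orderIsoOfFin h a) := by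
  simp [finsetPerm]

end finsetSign

theorem stmt0_general {E : Type*} [LinearOrder E] (g : E ≃ E) (γ : Finset E)
    (e : E) (he : e ∈ γ) :
    finsetSign g γ * finsetSign g (γ.erase e) =
      (-1 : ℤ) ^ finsetPos γ e * (-1 : ℤ) ^ finsetPos (γ.image g) (g e) := by
  set n := (γ.erase e).card
  have hn : γ.card = n + 1 := (card_erase_add_one he).symm
  have hge : g e ∈ γ.image g := mem_image_of_mem g he
  have hgn : (γ.image g).card = n + 1 := by rw [card_image_of_injective γ g.injective, hn]
  have hgn' : ((γ.erase e).image g).card = n := card_image_of_injective _ g.injective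
  set σ := finsetPerm g γ hn
  set σ' := finsetPerm g (γ.erase e) rfl
  set i := (γ.orderIsoOfFin hn).symm ⟨e, he⟩
  set j := ((γ.image g).orderIsoOfFin hgn).symm ⟨g e, hge⟩
  have hi : σ i = j := by
    rw [OrderIso.eq_symm_apply, Subtype.ext_iff, coe_orderIsoOfFin_finsetPerm g γ hn hgn]
    simp [i]
  have hsucc (k : Fin n) : σ (i.succAbove k) = j.succAbove (σ' k) := by
    apply (γ.image g).orderIsoOfFin hgn |>.injective
    rw [Subtype.ext_iff, coe_orderIsoOfFin_finsetPerm g γ hn hgn,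
      orderIsoOfFin_succAbove_orderIsoOfFin_symm hn he rfl rfl,
      orderIsoOfFin_succAbove_orderIsoOfFin_symm hgn hge (image_erase g.injective γ e).symm hgn']
    exact (coe_orderIsoOfFin_finsetPerm g _ rfl hgn' k).symm
  rw [finsetSign_eq_sign_finsetPerm g γ hn, finsetSign_eq_sign_finsetPerm g (γ.erase e) rfl,
    finsetPos, finsetPos, card_filter_le_eq_orderIsoOfFin_symm_add_one γ hn he,
    card_filter_le_eq_orderIsoOfFin_symm_add_one (γ.image g) hgn hge, ← Units.val_mul,
    Perm.sign_mul_sign_eq_neg_one_pow_of_succAbove hi hsucc]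
  push_cast
  ring

/-- **Lemma 6.4.** For a bijection `g` of a finite linearly ordered set `E`, a subset `γ ⊆ E`
and `e ∈ γ`:  `sgn(g:γ) · sgn(g:γ∖{e}) = (−1)^{pos(e:γ)} · (−1)^{pos(g e : g(γ))}`. -/
theorem stmt0 {E : Type*} [LinearOrder E] [Fintype E] (g : E ≃ E) (γ : Finset E)
    (e : E) (he : e ∈ γ) :
    finsetSign g γ * finsetSign g (γ.erase e) =
      (-1 : ℤ) ^ finsetPos γ e * (-1 : ℤ) ^ finsetPos (γ.image g) (g e) :=
  stmt0_general g γ e he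
end

section
/- Let E be a finite set and let P be a family of subsets of E which contains the empty set and is closed under taking subsets (if γ ∈ P and δ ⊆ γ then δ ∈ P). Suppose given signs R(γ,e) ∈ {−1,+1} for every γ ∈ P and e ∈ γ, satisfying for all γ ∈ P and all distinct e₁, e₂ ∈ γ: R(γ,e₁)·R(γ∖{e₁},e₂) = R(γ,e₂)·R(γ∖{e₂},e₁). Then there exists a map λ : P → {−1,+1} with λ(∅) = 1 such that for every nonempty γ ∈ P and every e ∈ γ: λ(γ) = R(γ,e)·λ(γ∖{e}). -/
/-!
Define `λ(γ)` by removing an arbitrarily chosen element `e₀` of `γ` and recursing: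
`λ(γ) = R(γ,e₀)·λ(γ∖{e₀})`. For any other `e ∈ γ`, unfolding `λ(γ∖{e₀})` at `e` and
`λ(γ∖{e})` at `e₀` (induction on `|γ|`) reduces the claim to the compatibility of `R` on the
pair `e₀, e`, so the recursion does not depend on the element removed.
-/

namespace Finset

variable {E : Type*} [DecidableEq E]

noncomputable def consistentSign (R : Finset E → E → ℤ) (γ : Finset E) : ℤ :=
  if h : γ.Nonempty then R γ h.choose * consistentSign R (γ.erase h.choose) else 1
termination_by γ.card
decreasing_by exact card_erase_lt_of_mem h.choose_spec

variable (R : Finset E → E → ℤ)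

theorem consistentSign_empty : consistentSign R ∅ = 1 := by
  rw [consistentSign, dif_neg not_nonempty_empty]

theorem consistentSign_of_nonempty {γ : Finset E} (h : γ.Nonempty) :
    consistentSign R γ = R γ h.choose * consistentSign R (γ.erase h.choose) := by
  rw [consistentSign, dif_pos h]

variable {P : Set (Finset E)} (hPdown : ∀ γ ∈ P, ∀ δ : Finset E, δ ⊆ γ → δ ∈ P)
include hPdown

theorem isUnit_consistentSign (hR : ∀ γ ∈ P, ∀ e ∈ γ, IsUnit (R γ e)) :
    ∀ γ ∈ P, IsUnit (consistentSign R γ) := by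
  intro γ
  induction γ using strongInduction with
  | H γ ih =>
    intro hγ
    rcases γ.eq_empty_or_nonempty with rfl | hne
    · simp [consistentSign_empty]
    · rw [consistentSign_of_nonempty R hne]
      exact (hR γ hγ _ hne.choose_spec).mul <| ih _ (erase_ssubset hne.choose_spec)
        (hPdown γ hγ _ (erase_subset _ _))

theorem consistentSign_eq_mul_erase
    (hcomp : ∀ γ ∈ P, ∀ e₁ ∈ γ, ∀ e₂ ∈ γ, e₁ ≠ e₂ →
      R γ e₁ * R (γ.erase e₁) e₂ = R γ e₂ * R (γ.erase e₂) e₁) :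
    ∀ γ ∈ P, ∀ e ∈ γ, consistentSign R γ = R γ e * consistentSign R (γ.erase e) := by
  intro γ
  induction γ using strongInduction with
  | H γ ih =>
    intro hγ e he
    have hne : γ.Nonempty := ⟨e, he⟩
    set e₀ := hne.choose
    have he₀ : e₀ ∈ γ := hne.choose_spec
    rw [consistentSign_of_nonempty R hne]
    by_cases heq : e = e₀
    · rw [heq]
    have ih₀ := ih _ (erase_ssubset he₀) (hPdown γ hγ _ (erase_subset _ _)) e
      (mem_erase.mpr ⟨heq, he⟩)
    have ih₁ := ih _ (erase_ssubset he) (hPdown γ hγ _ (erase_subset _ _)) e₀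
      (mem_erase.mpr ⟨Ne.symm heq, he₀⟩)
    rw [ih₀, ih₁, erase_right_comm, ← mul_assoc, ← mul_assoc,
      hcomp γ hγ e₀ he₀ e he (Ne.symm heq)]

end Finset

theorem stmt8_general {E : Type*} [DecidableEq E]
    (P : Set (Finset E))
    (hPdown : ∀ γ ∈ P, ∀ δ : Finset E, δ ⊆ γ → δ ∈ P)
    (R : Finset E → E → ℤ)
    (hR : ∀ γ ∈ P, ∀ e ∈ γ, R γ e = 1 ∨ R γ e = -1)
    (hcomp : ∀ γ ∈ P, ∀ e₁ ∈ γ, ∀ e₂ ∈ γ, e₁ ≠ e₂ →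
      R γ e₁ * R (γ.erase e₁) e₂ = R γ e₂ * R (γ.erase e₂) e₁) :
    ∃ lam : Finset E → ℤ, lam ∅ = 1 ∧ (∀ γ ∈ P, lam γ = 1 ∨ lam γ = -1) ∧
      ∀ γ ∈ P, ∀ e ∈ γ, lam γ = R γ e * lam (γ.erase e) := by
  refine ⟨Finset.consistentSign R, Finset.consistentSign_empty R, fun γ hγ => ?_,
    Finset.consistentSign_eq_mul_erase R hPdown hcomp⟩
  simp only [← Int.isUnit_iff] at hR ⊢
  exact Finset.isUnit_consistentSign R hPdown hR γ hγ

/-- **Lemma 9.5 (abstract form).**  Let `E` be a finite set and `P` a family of subsets of `E`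
containing `∅` and closed under taking subsets.  Given signs `R(γ,e) ∈ {−1,+1}` for `γ ∈ P`,
`e ∈ γ`, satisfying `R(γ,e₁)·R(γ∖{e₁},e₂) = R(γ,e₂)·R(γ∖{e₂},e₁)` for distinct `e₁,e₂ ∈ γ`,
there is a map `λ : P → {−1,+1}` with `λ(∅) = 1` and `λ(γ) = R(γ,e)·λ(γ∖{e})` for all
`γ ∈ P` and `e ∈ γ`. -/
theorem stmt8 {E : Type*} [Fintype E] [DecidableEq E]
    (P : Set (Finset E)) (hP0 : (∅ : Finset E) ∈ P)
    (hPdown : ∀ γ ∈ P, ∀ δ : Finset E, δ ⊆ γ → δ ∈ P)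
    (R : Finset E → E → ℤ)
    (hR : ∀ γ ∈ P, ∀ e ∈ γ, R γ e = 1 ∨ R γ e = -1)
    (hcomp : ∀ γ ∈ P, ∀ e₁ ∈ γ, ∀ e₂ ∈ γ, e₁ ≠ e₂ →
      R γ e₁ * R (γ.erase e₁) e₂ = R γ e₂ * R (γ.erase e₂) e₁) :
    ∃ lam : Finset E → ℤ, lam ∅ = 1 ∧ (∀ γ ∈ P, lam γ = 1 ∨ lam γ = -1) ∧
      ∀ γ ∈ P, ∀ e ∈ γ, lam γ = R γ e * lam (γ.erase e) :=
  stmt8_general P hPdown R hR hcomp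
end
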